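/- Let r = 3 and 2βμ ≥ 1. Then G(u) = μAu + B(u) + βC(u) is globally monotone: ⟨G(u₁)-G(u₂), u₁-u₂⟩ ≥ 0 for all u₁, u₂ ∈ V ∩ L⁴. -/

import Mathlib

open MeasureTheory Real
noncomputable section

/-- Euclidean 3-space, used both as the periodic box parametrization and target. -/
abbrev E3 := EuclideanSpace ℝ (Fin 3)

/-- The fundamental domain `[0,L]³` of the torus `T³`. -/
def box (L : ℝ) : Set E3 := {x | ∀ i, x i ∈ Set.Icc (0 : ℝ) L}

/-- The standard basis vector `e_i`. -/
def e3 (i : Fin 3) : E3 := EuclideanSpace.single i 1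

/-- `u` is `L`-periodic in each coordinate direction. -/
def Periodic3 (L : ℝ) {α : Type*} (u : E3 → α) : Prop :=
  ∀ (x : E3) (i : Fin 3), u (x + L • e3 i) = u x

/-- `|∇u|² = Σ_{i,j} (∂u_j/∂x_i)²`. -/
def gradNormSq (u : E3 → E3) (x : E3) : ℝ :=
  ∑ i, ∑ j, (fderiv ℝ u x (e3 i) j) ^ 2

/-- `|∇f|²` for a scalar function. -/
def gradNormSqScalar (f : E3 → ℝ) (x : E3) : ℝ :=
  ∑ i, (fderiv ℝ f x (e3 i)) ^ 2

/-- `u` is divergence free. -/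
def divFree (u : E3 → E3) : Prop := ∀ x, ∑ i, fderiv ℝ u x (e3 i) i = 0

/-- The Laplacian `Δu`. -/
def lap (u : E3 → E3) (x : E3) : E3 :=
  ∑ i, fderiv ℝ (fun y => fderiv ℝ u y (e3 i)) x (e3 i)

/-- The Navier–Stokes trilinear form `b(u,v,w) = ∫ (u·∇)v·w`. -/
def triB (L : ℝ) (u v w : E3 → E3) : ℝ :=
  ∫ x in box L, ∑ i, ∑ j, u x i * fderiv ℝ v x (e3 i) j * w x j

/-- The `L^p` norm over the fundamental domain (for a real exponent `p`). -/
def LpNorm (L p : ℝ) (u : E3 → E3) : ℝ := (∫ x in box L, ‖u x‖ ^ p) ^ (1 / p)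

/-- The square of the `V`-norm, `‖u‖_V² = ∫ |∇u|²`. -/
def VnormSq (L : ℝ) (u : E3 → E3) : ℝ := ∫ x in box L, gradNormSq u x

/-- The `V`-norm `‖u‖_V = ‖∇u‖_{L²}`. -/
def Vnorm (L : ℝ) (u : E3 → E3) : ℝ := Real.sqrt (VnormSq L u)

/-!
The inequality already holds pointwise, before integration. With `w = u₁ - u₂` and `G = |∇w|²`,
Cauchy–Schwarz bounds the convective term by `|w| |∇w| |u₂|`, and Young's inequality with weight
`β` turns this into `G / (2β) + (β/2) |u₂|² |w|²`. The cubic term dominates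
`(1/2) |u₂|² |w|²` by the identity
`2⟪|a|²a - |b|²b, a - b⟫ - |b|²|a - b|² = |a|²|a - b|² + (|a|² - |b|²)²`,
so what is left is `(μ - 1/(2β)) G ≥ 0`.
-/

lemma isCompact_box (L : ℝ) : IsCompact (box L) := by
  have h : box L = EuclideanSpace.equiv (Fin 3) ℝ ⁻¹' Set.Icc 0 fun _ => L := by
    ext x; simp [box, Pi.le_def, forall_and]
  rw [h]
  exact (EuclideanSpace.equiv (Fin 3) ℝ).toHomeomorph.isCompact_preimage.2 isCompact_Icc

lemma sq_norm_mul_sq_norm_sub_le_inner_cubic {F : Type*} [NormedAddCommGroup F]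
    [InnerProductSpace ℝ F] (a b : F) :
    ‖b‖ ^ 2 * ‖a - b‖ ^ 2 ≤ 2 * inner ℝ (‖a‖ ^ 2 • a - ‖b‖ ^ 2 • b) (a - b) := by
  have hab := norm_sub_sq_real a b
  simp only [inner_sub_left, inner_sub_right, real_inner_smul_left, real_inner_self_eq_norm_sq,
    real_inner_comm a b] at hab ⊢
  nlinarith [mul_nonneg (sq_nonneg ‖a‖) (sq_nonneg ‖a - b‖), sq_nonneg (‖a‖ ^ 2 - ‖b‖ ^ 2)]

lemma sq_sum_sum_mul_mul_le {ι κ : Type*} [Fintype ι] [Fintype κ]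
    (w : ι → ℝ) (D : ι → κ → ℝ) (v : κ → ℝ) :
    (∑ i, ∑ j, w i * D i j * v j) ^ 2 ≤
      (∑ i, w i ^ 2) * (∑ i, ∑ j, D i j ^ 2) * ∑ j, v j ^ 2 := by
  calc (∑ i, ∑ j, w i * D i j * v j) ^ 2
      = (∑ j, (∑ i, w i * D i j) * v j) ^ 2 := by
        simp only [Finset.sum_mul]; rw [Finset.sum_comm]
    _ ≤ (∑ j, (∑ i, w i * D i j) ^ 2) * ∑ j, v j ^ 2 := Finset.sum_mul_sq_le_sq_mul_sq _ _ _
    _ ≤ (∑ j, (∑ i, w i ^ 2) * ∑ i, D i j ^ 2) * ∑ j, v j ^ 2 := by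
        gcongr with j; exact Finset.sum_mul_sq_le_sq_mul_sq _ _ _
    _ = (∑ i, w i ^ 2) * (∑ i, ∑ j, D i j ^ 2) * ∑ j, v j ^ 2 := by
        rw [← Finset.mul_sum, Finset.sum_comm]

lemma monotonicity_integrand_nonneg {ι : Type*} [Fintype ι] {μ β : ℝ} (hβ : 0 < β)
    (hcrit : 1 ≤ 2 * β * μ) (a b : EuclideanSpace ℝ ι) (D : ι → ι → ℝ) :
    0 ≤ μ * ∑ i, ∑ j, D i j ^ 2 - ∑ i, ∑ j, (a i - b i) * D i j * b j
      + β * ∑ j, (‖a‖ ^ 2 * a j - ‖b‖ ^ 2 * b j) * (a j - b j) := by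
  set G := ∑ i, ∑ j, D i j ^ 2
  set T := ∑ i, ∑ j, (a i - b i) * D i j * b j
  set C := ∑ j, (‖a‖ ^ 2 * a j - ‖b‖ ^ 2 * b j) * (a j - b j)
  have hG : 0 ≤ G := by positivity
  have hC : ‖b‖ ^ 2 * ‖a - b‖ ^ 2 ≤ 2 * C := by
    convert sq_norm_mul_sq_norm_sub_le_inner_cubic a b using 2
    simp [C, PiLp.inner_apply, mul_comm]
  have hT : (β * T) ^ 2 ≤ G * (β ^ 2 * (‖b‖ ^ 2 * ‖a - b‖ ^ 2)) := by
    have := sq_sum_sum_mul_mul_le (fun i => a i - b i) D b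
    simp only [EuclideanSpace.real_norm_sq_eq, PiLp.sub_apply]
    nlinarith [sq_nonneg β]
  have hYoung := two_mul_le_add_of_sq_le_mul hG (by positivity) hT
  nlinarith [mul_nonneg (sub_nonneg.2 hcrit) hG, mul_le_mul_of_nonneg_left hC (sq_nonneg β)]

/-- The pairing is expressed via `⟨A(u₁-u₂),u₁-u₂⟩ = ‖u₁-u₂‖_V²`,
`⟨B(u₁)-B(u₂),u₁-u₂⟩ = -b(u₁-u₂,u₁-u₂,u₂)` and the concrete `L^{4/3}`–`L⁴` pairing for
`C(u) = P(|u|²u)`. -/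
theorem stmt11_general (L μ β : ℝ) (hβ : 0 < β)
    (hcrit : 1 ≤ 2 * β * μ)
    (u₁ u₂ : E3 → E3)
    (h1 : ContDiff ℝ (⊤ : ℕ∞) u₁) (h2 : ContDiff ℝ (⊤ : ℕ∞) u₂) :
    0 ≤ μ * VnormSq L (u₁ - u₂)
        - triB L (u₁ - u₂) (u₁ - u₂) u₂
        + β * (∫ x in box L, ∑ j,
            (‖u₁ x‖ ^ 2 * u₁ x j - ‖u₂ x‖ ^ 2 * u₂ x j) * (u₁ x j - u₂ x j)) := by
  have hDw : Continuous (fderiv ℝ (u₁ - u₂)) := (h1.sub h2).continuous_fderiv (by simp)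
  have hu₁ := h1.continuous
  have hu₂ := h2.continuous
  have hgrad : Continuous (gradNormSq (u₁ - u₂)) := by unfold gradNormSq; fun_prop
  have hint {f : E3 → ℝ} (hf : Continuous f) : IntegrableOn f (box L) :=
    hf.continuousOn.integrableOn_compact (isCompact_box L)
  rw [VnormSq, triB, ← integral_const_mul, ← integral_const_mul, ← integral_sub, ← integral_add]
  · refine setIntegral_nonneg (isCompact_box L).isClosed.measurableSet fun x _ => ?_
    simpa [gradNormSq] using monotonicity_integrand_nonneg hβ hcrit (u₁ x) (u₂ x)
      fun i j => fderiv ℝ (u₁ - u₂) x (e3 i) j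
  all_goals exact hint (by fun_prop)

/-- For `r = 3` and `2βμ ≥ 1`, `G(u) = μAu + B(u) + βC(u)` is
globally monotone: `⟨G(u₁)-G(u₂), u₁-u₂⟩ ≥ 0`.  The pairing is expressed via
`⟨A(u₁-u₂),u₁-u₂⟩ = ‖u₁-u₂‖_V²`, `⟨B(u₁)-B(u₂),u₁-u₂⟩ = -b(u₁-u₂,u₁-u₂,u₂)`
and the concrete `L^{4/3}`–`L⁴` pairing for `C(u) = P(|u|²u)`. -/
theorem stmt11 (L μ β : ℝ) (hL : 0 < L) (hμ : 0 < μ) (hβ : 0 < β)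
    (hcrit : 1 ≤ 2 * β * μ)
    (u₁ u₂ : E3 → E3)
    (h1 : ContDiff ℝ (⊤ : ℕ∞) u₁) (h2 : ContDiff ℝ (⊤ : ℕ∞) u₂)
    (h1p : Periodic3 L u₁) (h2p : Periodic3 L u₂)
    (h1d : divFree u₁) (h2d : divFree u₂) :
    0 ≤ μ * VnormSq L (u₁ - u₂)
        - triB L (u₁ - u₂) (u₁ - u₂) u₂
        + β * (∫ x in box L, ∑ j,
            (‖u₁ x‖ ^ 2 * u₁ x j - ‖u₂ x‖ ^ 2 * u₂ x j) * (u₁ x j - u₂ x j)) :=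
  stmt11_general L μ β hβ hcrit u₁ u₂ h1 h2
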